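/- Two-dimensional large sieve over function fields: Let R, N ∈ ℕ, X₁,…,X_R ∈ k_∞ⁿ, and (a_g) complex numbers indexed by g ∈ Aⁿ. Then Σ_{i=1}^R |Σ_{g ∈ Aⁿ, |g|_∞ ≤ q^N} a_g e(g·X_i)|² ≪ q^{n(N+1)}·K·Σ_g |a_g|², where K = max_{1≤i₁≤R} #{1≤i₂≤R : ‖X_{i₁} − X_{i₂}‖_∞ ≤ q^{−(N+2)}} and ‖·‖_∞ is the induced distance on the torus k_∞ⁿ/Aⁿ. -/

import Mathlib

open Polynomial MeasureTheory

/-- Embedding of `F_q[t]` into `k_∞ = F_q((1/t))`, sending `t` to the inverse of the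
Laurent-series variable. -/
noncomputable def polyL {Fq : Type*} [Field Fq] : Polynomial Fq →ₐ[Fq] LaurentSeries Fq :=
  Polynomial.aeval (HahnSeries.single (-1 : ℤ) (1 : Fq))

open Classical in
/-- The absolute value at infinity on `k_∞`, with `|f|_∞ = q^(deg f)` for polynomials. -/
noncomputable def absInfty {Fq : Type*} [Field Fq] [Fintype Fq] (f : LaurentSeries Fq) : ℝ :=
  if f = 0 then 0 else (Fintype.card Fq : ℝ) ^ (-(f.order))

/-- The standard additive character `e` of `k_∞`: `e(∑ aᵢ tⁱ) = exp(2πi·Tr(a₋₁)/p)`. -/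
noncomputable def eChar (p : ℕ) [Fact p.Prime] {Fq : Type*} [Field Fq] [Fintype Fq]
    [Algebra (ZMod p) Fq] (f : LaurentSeries Fq) : ℂ :=
  Complex.exp (2 * Real.pi * Complex.I * (((Algebra.trace (ZMod p) Fq (f.coeff 1)).val : ℂ) / p))

/-- Embedding of `k = F_q(t)` into `k_∞`. -/
noncomputable def ratL {Fq : Type*} [Field Fq] (r : RatFunc Fq) : LaurentSeries Fq :=
  polyL r.num / polyL r.denom


set_option linter.unusedSectionVars false

section EChar
variable {p : ℕ} [Fact p.Prime] {Fq : Type} [Field Fq] [Fintype Fq] [CharP Fq p]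
  [Algebra (ZMod p) Fq]

lemma psi_aux (v : ℕ) :
    Complex.exp (2 * Real.pi * Complex.I * ((v : ℂ) / p)) =
      Complex.exp (2 * Real.pi * Complex.I * (1 / p)) ^ v := by
  rw [← Complex.exp_nat_mul]; ring_nf

lemma zeta_pow_p : Complex.exp (2 * Real.pi * Complex.I * (1 / p)) ^ (p : ℕ) = 1 := by
  have hp : (p : ℂ) ≠ 0 := by
    exact_mod_cast (Fact.out (p := p.Prime)).ne_zero
  rw [← Complex.exp_nat_mul]
  have : (p : ℂ) * (2 * Real.pi * Complex.I * (1 / p)) = 2 * Real.pi * Complex.I := by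
    field_simp
  rw [this, Complex.exp_two_pi_mul_I]

lemma zeta_pow_mod (a : ℕ) :
    Complex.exp (2 * Real.pi * Complex.I * (1 / p)) ^ (a % p) =
      Complex.exp (2 * Real.pi * Complex.I * (1 / p)) ^ a := by
  conv_rhs => rw [← Nat.div_add_mod a p]
  rw [pow_add, pow_mul, zeta_pow_p, one_pow, one_mul]

lemma eChar_add (f g : LaurentSeries Fq) :
    eChar p (f + g) = eChar p f * eChar p g := by
  haveI : NeZero p := ⟨(Fact.out (p := p.Prime)).ne_zero⟩
  unfold eChar
  rw [HahnSeries.coeff_add, map_add, psi_aux, psi_aux, psi_aux, ZMod.val_add, zeta_pow_mod,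
    pow_add]

lemma eChar_zero : eChar p (0 : LaurentSeries Fq) = 1 := by
  unfold eChar
  simp [HahnSeries.coeff_zero]

lemma eChar_abs (f : LaurentSeries Fq) : ‖eChar p f‖ = 1 := by
  unfold eChar
  have h : (2 * Real.pi * Complex.I *
      (((Algebra.trace (ZMod p) Fq (f.coeff 1)).val : ℂ) / p)) =
      ((2 * Real.pi * ((Algebra.trace (ZMod p) Fq (f.coeff 1)).val / p) : ℝ) : ℂ) *
        Complex.I := by
    push_cast; ring
  rw [h, Complex.norm_exp_ofReal_mul_I]

lemma eChar_ne_zero (f : LaurentSeries Fq) : eChar p f ≠ 0 := by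
  intro h; have := eChar_abs (p := p) f; rw [h] at this; simp at this

lemma eChar_neg (f : LaurentSeries Fq) : eChar p (-f) = (eChar p f)⁻¹ := by
  have h : eChar p f * eChar p (-f) = 1 := by
    rw [← eChar_add]; simp [eChar_zero]
  field_simp [eChar_ne_zero (p := p) f] at h ⊢
  linear_combination h

lemma conj_eChar (f : LaurentSeries Fq) :
    (starRingEnd ℂ) (eChar p f) = eChar p (-f) := by
  rw [eChar_neg]
  have h1 : eChar p f * (starRingEnd ℂ) (eChar p f) = 1 := by
    rw [Complex.mul_conj, Complex.normSq_eq_norm_sq, eChar_abs]; norm_num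
  field_simp [eChar_ne_zero (p := p) f] at h1 ⊢
  linear_combination h1

lemma eChar_eq_one_trace (f : LaurentSeries Fq) (h : eChar p f = 1) :
    Algebra.trace (ZMod p) Fq (f.coeff 1) = 0 := by
  haveI : NeZero p := ⟨(Fact.out (p := p.Prime)).ne_zero⟩
  unfold eChar at h
  rw [Complex.exp_eq_one_iff] at h
  obtain ⟨m, hm⟩ := h
  set v : ℕ := (Algebra.trace (ZMod p) Fq (f.coeff 1)).val with hv
  have hpi : (2 * Real.pi * Complex.I : ℂ) ≠ 0 := by
    simp [Real.pi_ne_zero, Complex.I_ne_zero]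
  have hp : (p : ℂ) ≠ 0 := by exact_mod_cast (Fact.out (p := p.Prime)).ne_zero
  have h2 : (v : ℂ) = m * p := by
    have : (2 * Real.pi * Complex.I) * ((v : ℂ)/p) = (2 * Real.pi * Complex.I) * m := by
      rw [hm]; ring
    have h3 := mul_left_cancel₀ hpi this
    field_simp at h3
    linear_combination h3
  have h4 : (v : ℤ) = m * p := by exact_mod_cast h2
  have h5 : (p : ℤ) ∣ (v : ℤ) := ⟨m, by linarith⟩
  have h6 : p ∣ v := by exact_mod_cast h5
  have h7 : v < p := ZMod.val_lt _
  have h8 : v = 0 := Nat.eq_zero_of_dvd_of_lt h6 h7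
  exact (ZMod.val_eq_zero _).1 h8

end EChar

section Aux2
variable {p : ℕ} [Fact p.Prime] {Fq : Type} [Field Fq] [Fintype Fq] [CharP Fq p]
  [Algebra (ZMod p) Fq]

lemma trace_nondeg (x : Fq) (hx : x ≠ 0) :
    ∃ c : Fq, Algebra.trace (ZMod p) Fq (x * c) ≠ 0 := by
  have hp : ringChar Fq = p := ringChar.eq Fq p
  subst hp
  exact FiniteField.trace_to_zmod_nondegenerate Fq hx

lemma polyL_monomial (k : ℕ) (c : Fq) :
    polyL (Polynomial.monomial k c) = HahnSeries.single (-(k : ℤ)) c := by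
  unfold polyL
  rw [Polynomial.aeval_monomial, HahnSeries.single_pow, HahnSeries.algebraMap_apply']
  have h0 : algebraMap Fq (PowerSeries Fq) c = PowerSeries.C c := rfl
  rw [h0, HahnSeries.ofPowerSeries_C, HahnSeries.C_apply, HahnSeries.single_mul_single]
  congr 1
  · simp
  · simp

lemma coeff_polyL_monomial_mul (k : ℕ) (c : Fq) (θ : LaurentSeries Fq) :
    (polyL (Polynomial.monomial k c) * θ).coeff 1 = c * θ.coeff (1 + k) := by
  rw [polyL_monomial]
  have := HahnSeries.coeff_single_mul_add (r := c) (x := θ) (a := (1 + k : ℤ)) (b := (-(k:ℤ)))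
  have h2 : ((1 + k : ℤ)) + (-(k:ℤ)) = 1 := by ring
  rw [h2] at this
  exact this

end Aux2

section VF
variable {Fq : Type} [Field Fq] [Fintype Fq]

noncomputable def phiP (N : ℕ) (v : Fin (N+1) → Fq) : Polynomial Fq :=
  ∑ k : Fin (N+1), Polynomial.monomial (k : ℕ) (v k)

lemma phiP_coeff (N : ℕ) (v : Fin (N+1) → Fq) (m : ℕ) :
    (phiP N v).coeff m = if h : m < N+1 then v ⟨m, h⟩ else 0 := by
  unfold phiP
  rw [Polynomial.finset_sum_coeff]
  simp only [Polynomial.coeff_monomial]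
  split
  · rename_i h
    rw [Finset.sum_eq_single (⟨m, h⟩ : Fin (N+1))]
    · simp
    · intro k _ hk
      have hne : (k : ℕ) ≠ m := fun he => hk (Fin.ext he)
      simp [hne]
    · simp
  · rename_i h
    apply Finset.sum_eq_zero
    intro k _
    have hne : (k : ℕ) ≠ m := by omega
    simp [hne]

open Classical in
noncomputable def VF (Fq : Type) [Field Fq] [Fintype Fq] (N : ℕ) : Finset (Polynomial Fq) :=
  Finset.image (phiP N) Finset.univ

lemma mem_VF {N : ℕ} {f : Polynomial Fq} : f ∈ VF Fq N ↔ f.degree ≤ (N : WithBot ℕ) := by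
  classical
  rw [VF]
  constructor
  · intro hf
    obtain ⟨v, _, rfl⟩ := Finset.mem_image.1 hf
    refine (Polynomial.degree_sum_le _ _).trans ?_
    refine Finset.sup_le fun k _ => ?_
    refine (Polynomial.degree_monomial_le _ _).trans ?_
    exact_mod_cast Nat.cast_le.mpr (Nat.lt_succ_iff.1 k.isLt)
  · intro hf
    refine Finset.mem_image.2 ⟨fun k : Fin (N+1) => f.coeff (k : ℕ), Finset.mem_univ _, ?_⟩
    ext m
    rw [phiP_coeff]
    split
    · rfl
    · rename_i h
      refine (Polynomial.coeff_eq_zero_of_degree_lt ?_).symm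
      refine lt_of_le_of_lt hf ?_
      exact_mod_cast Nat.cast_lt.mpr (by omega)

lemma phiP_injective (N : ℕ) : Function.Injective (phiP (Fq := Fq) N) := by
  intro v₁ v₂ h
  funext k
  have h1 := congrArg (fun f => Polynomial.coeff f (k : ℕ)) h
  simp only [phiP_coeff, k.isLt, dif_pos] at h1
  simpa using h1

lemma card_VF (N : ℕ) : (VF Fq N).card = Fintype.card Fq ^ (N+1) := by
  classical
  rw [VF]
  rw [Finset.card_image_of_injective _ (phiP_injective N), Finset.card_univ]
  simp

lemma VF_add_mem {N : ℕ} {f g : Polynomial Fq} (hf : f ∈ VF Fq N) (hg : g ∈ VF Fq N) :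
    f + g ∈ VF Fq N := by
  rw [mem_VF] at *
  exact (Polynomial.degree_add_le _ _).trans (max_le hf hg)

lemma VF_sub_mem {N : ℕ} {f g : Polynomial Fq} (hf : f ∈ VF Fq N) (hg : g ∈ VF Fq N) :
    f - g ∈ VF Fq N := by
  rw [mem_VF] at *
  exact (Polynomial.degree_sub_le _ _).trans (max_le hf hg)

lemma VF_zero_mem (N : ℕ) : (0 : Polynomial Fq) ∈ VF Fq N := by
  rw [mem_VF, Polynomial.degree_zero]
  exact bot_le

end VF

section CharSum
variable {p : ℕ} [Fact p.Prime] {Fq : Type} [Field Fq] [Fintype Fq] [CharP Fq p]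
  [Algebra (ZMod p) Fq]

lemma sum_VF_zero {N : ℕ} (θ : LaurentSeries Fq) (f₀ : Polynomial Fq) (h₀ : f₀ ∈ VF Fq N)
    (hne : eChar p (polyL f₀ * θ) ≠ 1) :
    ∑ f ∈ VF Fq N, eChar p (polyL f * θ) = 0 := by
  classical
  have key : (∑ f ∈ VF Fq N, eChar p (polyL f * θ)) =
      eChar p (polyL f₀ * θ) * ∑ f ∈ VF Fq N, eChar p (polyL f * θ) := by
    rw [Finset.mul_sum]
    have h1 : ∀ f ∈ VF Fq N, eChar p (polyL f₀ * θ) * eChar p (polyL f * θ)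
        = eChar p (polyL (f₀ + f) * θ) := by
      intro f _
      rw [← eChar_add, map_add, add_mul]
    rw [Finset.sum_congr rfl h1]
    refine (Finset.sum_bij' (fun f (_ : f ∈ VF Fq N) => f - f₀)
      (fun f (_ : f ∈ VF Fq N) => f₀ + f) ?_ ?_ ?_ ?_ ?_)
    · intro a ha; exact VF_sub_mem ha h₀
    · intro a ha; exact VF_add_mem h₀ ha
    · intro a _; ring
    · intro a _; ring
    · intro a _; congr 1; ring
  have h2 : (1 - eChar p (polyL f₀ * θ)) * (∑ f ∈ VF Fq N, eChar p (polyL f * θ)) = 0 := by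
    linear_combination key
  rcases mul_eq_zero.1 h2 with h3 | h3
  · exact absurd (by linear_combination -h3) hne
  · exact h3

lemma sum_VF_cases {N : ℕ} (θ : LaurentSeries Fq) :
    (∑ f ∈ VF Fq N, eChar p (polyL f * θ) = 0) ∨
      ((∀ f ∈ VF Fq N, eChar p (polyL f * θ) = 1) ∧
        ∑ f ∈ VF Fq N, eChar p (polyL f * θ) = (Fintype.card Fq : ℂ) ^ (N+1)) := by
  by_cases h : ∀ f ∈ VF Fq N, eChar p (polyL f * θ) = 1
  · right
    refine ⟨h, ?_⟩
    rw [Finset.sum_congr rfl h, Finset.sum_const, nsmul_eq_mul, mul_one,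
      card_VF (Fq := Fq) N]
    push_cast
    ring
  · left
    push_neg at h
    obtain ⟨f₀, h₀, hne⟩ := h
    exact sum_VF_zero θ f₀ h₀ hne

lemma coeff_vanish {N : ℕ} (θ : LaurentSeries Fq)
    (h : ∀ f ∈ VF Fq N, eChar p (polyL f * θ) = 1) :
    ∀ m : ℤ, 0 < m → m ≤ (N:ℤ)+1 → θ.coeff m = 0 := by
  intro m hm1 hm2
  by_contra hx
  obtain ⟨c, hc⟩ := trace_nondeg (p := p) (θ.coeff m) hx
  set k : ℕ := (m-1).toNat with hk
  have hkm : (1 + (k:ℤ)) = m := by omega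
  have hkN : k ≤ N := by omega
  have hmem : Polynomial.monomial k c ∈ VF Fq N := by
    rw [mem_VF]
    refine (Polynomial.degree_monomial_le _ _).trans ?_
    exact_mod_cast Nat.cast_le.mpr hkN
  have h1 := h _ hmem
  have h2 := eChar_eq_one_trace _ h1
  rw [coeff_polyL_monomial_mul] at h2
  rw [show ((1:ℤ) + (k:ℤ)) = m from hkm] at h2
  rw [mul_comm] at h2
  exact hc h2

lemma absInfty_nonneg (f : LaurentSeries Fq) : 0 ≤ absInfty f := by
  unfold absInfty
  split
  · exact le_refl 0
  · exact zpow_nonneg (by exact_mod_cast Nat.zero_le _) _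

lemma absInfty_neg (f : LaurentSeries Fq) : absInfty (-f) = absInfty f := by
  unfold absInfty
  rw [neg_eq_zero, HahnSeries.order_neg]

lemma hahn_sum_coeff {ι : Type} (s : Finset ι) (F : ι → LaurentSeries Fq) (m : ℤ) :
    (∑ i ∈ s, F i).coeff m = ∑ i ∈ s, (F i).coeff m := by
  classical
  induction s using Finset.induction with
  | empty => simp
  | insert _ _ h ih => rw [Finset.sum_insert h, Finset.sum_insert h, HahnSeries.coeff_add, ih]

lemma exists_close {N : ℕ} (θ : LaurentSeries Fq)
    (h : ∀ m : ℤ, 0 < m → m ≤ (N:ℤ)+1 → θ.coeff m = 0) :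
    ∃ c : Polynomial Fq, absInfty (θ + polyL c) ≤ (Fintype.card Fq : ℝ) ^ (-((N:ℤ)+2)) := by
  have hq1 : (1:ℝ) ≤ (Fintype.card Fq : ℝ) := by
    have h1 : (1:ℕ) ≤ Fintype.card Fq := Fintype.card_pos
    exact_mod_cast h1
  by_cases hθ : θ = 0
  · refine ⟨0, ?_⟩
    rw [map_zero, hθ, add_zero]
    unfold absInfty
    rw [if_pos rfl]
    positivity
  · set K : ℕ := (-θ.order).toNat with hK
    set c : Polynomial Fq := ∑ k ∈ Finset.range (K+1),
      Polynomial.monomial k (-θ.coeff (-(k:ℤ))) with hc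
    have hpc : polyL c = ∑ k ∈ Finset.range (K+1),
        HahnSeries.single (-(k:ℤ)) (-θ.coeff (-(k:ℤ))) := by
      rw [hc, map_sum]
      exact Finset.sum_congr rfl fun k _ => polyL_monomial k _
    have horder : -(K:ℤ) ≤ θ.order := by omega
    have key : ∀ m : ℤ, m ≤ (N:ℤ)+1 → (θ + polyL c).coeff m = 0 := by
      intro m hm
      rw [HahnSeries.coeff_add, hpc, hahn_sum_coeff]
      simp only [HahnSeries.coeff_single]
      rcases lt_or_ge 0 m with hm0 | hm0
      · rw [h m hm0 hm, Finset.sum_eq_zero, add_zero]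
        intro k _
        rw [if_neg]
        omega
      · rcases le_or_gt (-(K:ℤ)) m with hmK | hmK
        · rw [Finset.sum_eq_single_of_mem ((-m).toNat) (Finset.mem_range.2 (by omega))]
          · rw [if_pos (by omega)]
            have he : (-(((-m).toNat : ℕ) : ℤ)) = m := by omega
            rw [he, add_neg_cancel]
          · intro k _ hk
            rw [if_neg]
            intro hmk
            apply hk
            omega
        · rw [HahnSeries.coeff_eq_zero_of_lt_order (lt_of_lt_of_le hmK horder),
            Finset.sum_eq_zero, zero_add]
          intro k hkr
          rw [if_neg]
          have := Finset.mem_range.1 hkr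
          omega
    by_cases hs : θ + polyL c = 0
    · refine ⟨c, ?_⟩
      rw [hs]
      unfold absInfty
      rw [if_pos rfl]
      exact zpow_nonneg (by exact_mod_cast Nat.zero_le _) _
    · refine ⟨c, ?_⟩
      have hord : (N:ℤ)+2 ≤ (θ + polyL c).order := by
        by_contra hlt
        push_neg at hlt
        exact hs (HahnSeries.coeff_order_eq_zero.1 (key _ (by omega)))
      unfold absInfty
      rw [if_neg hs]
      apply zpow_le_zpow_right₀ hq1
      omega

end CharSum

section MainLemmas
variable {p : ℕ} [Fact p.Prime] {Fq : Type} [Field Fq] [Fintype Fq] [CharP Fq p]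
  [Algebra (ZMod p) Fq]

lemma sum_VF_triv {N : ℕ} (θ : LaurentSeries Fq)
    (h : ∀ f ∈ VF Fq N, eChar p (polyL f * θ) = 1) :
    ∑ f ∈ VF Fq N, eChar p (polyL f * θ) = (Fintype.card Fq : ℂ) ^ (N+1) := by
  rw [Finset.sum_congr rfl h, Finset.sum_const, nsmul_eq_mul, mul_one,
    card_VF (Fq := Fq) N]
  push_cast
  ring

lemma eChar_finsum {ι : Type} (s : Finset ι) (x : ι → LaurentSeries Fq) :
    eChar p (∑ j ∈ s, x j) = ∏ j ∈ s, eChar p (x j) := by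
  classical
  induction s using Finset.induction with
  | empty => simp [eChar_zero]
  | insert _ _ h ih => rw [Finset.sum_insert h, Finset.prod_insert h, eChar_add, ih]

lemma pair_sum (n N : ℕ) (θ : Fin n → LaurentSeries Fq) :
    (∑ g ∈ Fintype.piFinset (fun _ : Fin n => VF Fq N),
        eChar p (∑ j, polyL (g j) * θ j)) = 0 ∨
      ((∑ g ∈ Fintype.piFinset (fun _ : Fin n => VF Fq N),
          eChar p (∑ j, polyL (g j) * θ j)) = ((Fintype.card Fq : ℂ) ^ (N+1)) ^ n ∧
        ∃ c : Fin n → Polynomial Fq, ∀ j,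
          absInfty (θ j + polyL (c j)) ≤ (Fintype.card Fq : ℝ) ^ (-((N:ℤ)+2))) := by
  classical
  have hfac : (∑ g ∈ Fintype.piFinset (fun _ : Fin n => VF Fq N),
      eChar p (∑ j, polyL (g j) * θ j))
      = ∏ j, ∑ f ∈ VF Fq N, eChar p (polyL f * θ j) := by
    rw [Finset.prod_univ_sum]
    exact Finset.sum_congr rfl fun g _ => eChar_finsum _ _
  by_cases hall : ∀ j, ∀ f ∈ VF Fq N, eChar p (polyL f * θ j) = 1
  · right
    constructor
    · rw [hfac, Finset.prod_congr rfl fun j _ => sum_VF_triv (θ j) (hall j),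
        Finset.prod_const, Finset.card_univ, Fintype.card_fin]
    · choose c hc using fun j => exists_close (θ j)
        (coeff_vanish (θ j) (hall j))
      exact ⟨c, hc⟩
  · left
    push_neg at hall
    obtain ⟨j₀, f₀, hf₀, hne⟩ := hall
    rw [hfac]
    exact Finset.prod_eq_zero (Finset.mem_univ j₀) (sum_VF_zero _ f₀ hf₀ hne)

end MainLemmas

section Symm
variable {Fq : Type} [Field Fq] [Fintype Fq]

lemma iInf_dist_symm {n : ℕ} (X Y : Fin n → LaurentSeries Fq) :
    (⨅ c : Fin n → Polynomial Fq, ⨆ j, absInfty (X j - Y j + polyL (c j)))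
      = ⨅ c : Fin n → Polynomial Fq, ⨆ j, absInfty (Y j - X j + polyL (c j)) := by
  have hpt : ∀ (U V : Fin n → LaurentSeries Fq) (c : Fin n → Polynomial Fq),
      (⨆ j, absInfty (U j - V j + polyL ((-c) j))) =
        ⨆ j, absInfty (V j - U j + polyL (c j)) := by
    intro U V c
    refine iSup_congr fun j => ?_
    rw [Pi.neg_apply, map_neg]
    rw [show U j - V j + -polyL (c j) = -(V j - U j + polyL (c j)) by ring]
    exact absInfty_neg _
  have hbdd : ∀ (U V : Fin n → LaurentSeries Fq),
      BddBelow (Set.range fun c : Fin n → Polynomial Fq =>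
        ⨆ j, absInfty (U j - V j + polyL (c j))) := by
    intro U V
    refine ⟨0, fun y hy => ?_⟩
    obtain ⟨c, rfl⟩ := hy
    exact Real.iSup_nonneg fun j => absInfty_nonneg _
  apply le_antisymm
  · refine le_ciInf fun c => ?_
    exact (ciInf_le (hbdd X Y) (-c)).trans_eq (hpt X Y c)
  · refine le_ciInf fun c => ?_
    exact (ciInf_le (hbdd Y X) (-c)).trans_eq (hpt Y X c)

lemma bdd_dist {n : ℕ} (X Y : Fin n → LaurentSeries Fq) :
    BddBelow (Set.range fun c : Fin n → Polynomial Fq =>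
      ⨆ j, absInfty (X j - Y j + polyL (c j))) := by
  refine ⟨0, fun y hy => ?_⟩
  obtain ⟨c, rfl⟩ := hy
  exact Real.iSup_nonneg fun j => absInfty_nonneg _

end Symm

section Tsum
lemma tsum_deg_le {Fq : Type} [Field Fq] [Fintype Fq] {n N : ℕ} {M : Type*}
    [AddCommMonoid M] [TopologicalSpace M] (G : (Fin n → Polynomial Fq) → M) :
    ∑' (g : {g : Fin n → Polynomial Fq // ∀ j, (g j).degree ≤ (N : WithBot ℕ)}), G g.val
      = ∑ g ∈ Fintype.piFinset (fun _ : Fin n => VF Fq N), G g := by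
  classical
  have hset : {g : Fin n → Polynomial Fq | ∀ j, (g j).degree ≤ (N : WithBot ℕ)}
      = ↑(Fintype.piFinset fun _ : Fin n => VF Fq N) := by
    ext g
    simp only [Set.mem_setOf_eq, Finset.coe_sort_coe, Finset.mem_coe, Fintype.mem_piFinset]
    exact forall_congr' fun j => (mem_VF).symm
  have h1 : ∑' (g : {g : Fin n → Polynomial Fq // ∀ j, (g j).degree ≤ (N : WithBot ℕ)}),
      G g.val
      = ∑' (x : ↥({g : Fin n → Polynomial Fq | ∀ j, (g j).degree ≤ (N : WithBot ℕ)} : Set _)),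
        G x.val := rfl
  rw [h1, tsum_subtype, hset, ← tsum_subtype, Finset.tsum_subtype']

end Tsum

section MainDefs

noncomputable def DD (Fq : Type) [Field Fq] [Fintype Fq] (n N : ℕ) :
    Finset (Fin n → Polynomial Fq) :=
  Fintype.piFinset (fun _ => VF Fq N)

noncomputable def EE (p : ℕ) [Fact p.Prime] {Fq : Type} [Field Fq] [Fintype Fq]
    [Algebra (ZMod p) Fq] {n : ℕ} (Xi : Fin n → LaurentSeries Fq)
    (g : Fin n → Polynomial Fq) : ℂ :=
  eChar p (∑ j, polyL (g j) * Xi j)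

variable (p : ℕ) [Fact p.Prime] {Fq : Type} [Field Fq] [Fintype Fq] [CharP Fq p]
  [Algebra (ZMod p) Fq] {n R : ℕ} (N : ℕ)

noncomputable def SS (X : Fin R → Fin n → LaurentSeries Fq)
    (a : (Fin n → Polynomial Fq) → ℂ) (i : Fin R) : ℂ :=
  ∑ g ∈ DD Fq n N, a g * EE p (X i) g

noncomputable def WW (X : Fin R → Fin n → LaurentSeries Fq)
    (a : (Fin n → Polynomial Fq) → ℂ) (g : Fin n → Polynomial Fq) : ℂ :=
  ∑ i, (starRingEnd ℂ) (SS p N X a i) * EE p (X i) g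

noncomputable def PP (X : Fin R → Fin n → LaurentSeries Fq) (i i' : Fin R) : ℂ :=
  ∑ g ∈ DD Fq n N, eChar p (∑ j, polyL (g j) * (X i j - X i' j))

def closeRel (Fq : Type) [Field Fq] [Fintype Fq] {n R : ℕ} (N : ℕ)
    (X : Fin R → Fin n → LaurentSeries Fq) (i i' : Fin R) : Prop :=
  (⨅ c : Fin n → Polynomial Fq, ⨆ j, absInfty (X i j - X i' j + polyL (c j)))
    ≤ (Fintype.card Fq : ℝ) ^ (-(N + 2 : ℤ))

variable (X : Fin R → Fin n → LaurentSeries Fq) (a : (Fin n → Polynomial Fq) → ℂ)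

lemma EE_mul_conj (i i' : Fin R) (g : Fin n → Polynomial Fq) :
    EE p (X i) g * (starRingEnd ℂ) (EE p (X i') g)
      = eChar p (∑ j, polyL (g j) * (X i j - X i' j)) := by
  unfold EE
  rw [conj_eChar, ← eChar_add]
  congr 1
  rw [← sub_eq_add_neg, ← Finset.sum_sub_distrib]
  exact Finset.sum_congr rfl fun j _ => (mul_sub _ _ _).symm

lemma habs_sq (z : ℂ) : ((‖z‖^2 : ℝ) : ℂ) = z * (starRingEnd ℂ) z := by
  rw [Complex.mul_conj, Complex.normSq_eq_norm_sq]

lemma T_expand :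
    ((∑ g ∈ DD Fq n N, ‖WW p N X a g‖^2 : ℝ) : ℂ)
      = ∑ i, ∑ i', (starRingEnd ℂ) (SS p N X a i) * SS p N X a i' * PP p N X i i' := by
  push_cast
  have h1 : ∀ g, ((‖WW p N X a g‖^2 : ℝ):ℂ)
      = ∑ i, ∑ i', (starRingEnd ℂ) (SS p N X a i) * SS p N X a i'
          * (EE p (X i) g * (starRingEnd ℂ) (EE p (X i') g)) := by
    intro g
    rw [habs_sq]
    unfold WW
    rw [map_sum, Finset.sum_mul_sum]
    refine Finset.sum_congr rfl fun i _ => Finset.sum_congr rfl fun i' _ => ?_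
    rw [map_mul, Complex.conj_conj]
    ring
  have h2 : (∑ g ∈ DD Fq n N, ((‖WW p N X a g‖^2 : ℝ):ℂ))
      = ∑ g ∈ DD Fq n N, ∑ i, ∑ i', (starRingEnd ℂ) (SS p N X a i) * SS p N X a i'
          * (EE p (X i) g * (starRingEnd ℂ) (EE p (X i') g)) :=
    Finset.sum_congr rfl fun g _ => h1 g
  push_cast at h2
  rw [h2, Finset.sum_comm]
  refine Finset.sum_congr rfl fun i _ => ?_
  rw [Finset.sum_comm]
  refine Finset.sum_congr rfl fun i' _ => ?_
  rw [← Finset.mul_sum]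
  congr 1
  unfold PP
  exact Finset.sum_congr rfl fun g _ => EE_mul_conj p X i i' g

lemma L_eq :
    ((∑ i, ‖SS p N X a i‖^2 : ℝ) : ℂ) = ∑ g ∈ DD Fq n N, a g * WW p N X a g := by
  push_cast
  have h1 : ∀ i, ((‖SS p N X a i‖^2 : ℝ):ℂ)
      = ∑ g ∈ DD Fq n N, a g * ((starRingEnd ℂ) (SS p N X a i) * EE p (X i) g) := by
    intro i
    rw [habs_sq]
    conv_lhs => rw [show SS p N X a i * (starRingEnd ℂ) (SS p N X a i)
      = (∑ g ∈ DD Fq n N, a g * EE p (X i) g) * (starRingEnd ℂ) (SS p N X a i) from rfl]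
    rw [Finset.sum_mul]
    exact Finset.sum_congr rfl fun g _ => by ring
  have h2 : (∑ i, ((‖SS p N X a i‖^2 : ℝ):ℂ))
      = ∑ i, ∑ g ∈ DD Fq n N, a g * ((starRingEnd ℂ) (SS p N X a i) * EE p (X i) g) :=
    Finset.sum_congr rfl fun i _ => h1 i
  push_cast at h2
  rw [h2, Finset.sum_comm]
  refine Finset.sum_congr rfl fun g _ => ?_
  rw [← Finset.mul_sum]
  rfl

lemma PP_cases (i i' : Fin R) :
    PP p N X i i' = 0 ∨
      (PP p N X i i' = ((Fintype.card Fq : ℂ) ^ (n * (N+1))) ∧ closeRel Fq N X i i') := by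
  rcases pair_sum (p := p) n N (fun j => X i j - X i' j) with h | ⟨hval, c, hc⟩
  · left
    exact h
  · right
    constructor
    · unfold PP DD
      rw [hval, ← pow_mul, mul_comm (N+1) n]
    · unfold closeRel
      have hB : (0:ℝ) ≤ (Fintype.card Fq : ℝ) ^ (-(N + 2 : ℤ)) :=
        zpow_nonneg (by exact_mod_cast Nat.zero_le _) _
      refine (ciInf_le (bdd_dist _ _) c).trans ?_
      exact Real.iSup_le (fun j => hc j) hB
end MainDefs

section Bound
variable (p : ℕ) [Fact p.Prime] {Fq : Type} [Field Fq] [Fintype Fq] [CharP Fq p]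
  [Algebra (ZMod p) Fq] {n R : ℕ} (N : ℕ)
  (X : Fin R → Fin n → LaurentSeries Fq) (a : (Fin n → Polynomial Fq) → ℂ) (𝒦 : ℕ)

lemma T_bound (hK : ∀ i₁ : Fin R, Nat.card {i₂ : Fin R // closeRel Fq N X i₁ i₂} ≤ 𝒦) :
    (∑ g ∈ DD Fq n N, ‖WW p N X a g‖^2)
      ≤ (Fintype.card Fq : ℝ) ^ (n * (N+1)) * 𝒦 * ∑ i, ‖SS p N X a i‖^2 := by
  classical
  set qM : ℝ := (Fintype.card Fq : ℝ) ^ (n * (N+1)) with hqM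
  have hqM0 : 0 ≤ qM := by positivity
  set L : ℝ := ∑ i, ‖SS p N X a i‖^2 with hLdef
  set T : ℝ := ∑ g ∈ DD Fq n N, ‖WW p N X a g‖^2 with hTdef
  have hT0 : 0 ≤ T := Finset.sum_nonneg fun g _ => sq_nonneg _
  have hrow : ∀ i : Fin R,
      (((Finset.univ.filter fun i' => closeRel Fq N X i i').card : ℕ) : ℝ) ≤ 𝒦 := by
    intro i
    have h1 : Nat.card {i₂ : Fin R // closeRel Fq N X i i₂} ≤ 𝒦 := hK i
    rw [Nat.card_eq_fintype_card, Fintype.card_subtype] at h1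
    exact_mod_cast h1
  have hsymm : ∀ i i', closeRel Fq N X i i' ↔ closeRel Fq N X i' i := by
    intro i i'
    unfold closeRel
    rw [iInf_dist_symm]
  have habsPP : ∀ i i',
      ‖PP p N X i i'‖ ≤ (if closeRel Fq N X i i' then qM else 0) := by
    intro i i'
    rcases PP_cases p N X i i' with h | ⟨hval, hcl⟩
    · rw [h, norm_zero]
      split
      · exact hqM0
      · exact le_refl 0
    · rw [if_pos hcl, hval, norm_pow, Complex.norm_natCast]
  have hTabs : T = ‖((T : ℂ))‖ := by
    rw [Complex.norm_real, Real.norm_eq_abs, abs_of_nonneg hT0]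
  have hstep1 : T ≤ ∑ i, ∑ i', ‖SS p N X a i‖ * ‖SS p N X a i'‖ *
      (if closeRel Fq N X i i' then qM else 0) := by
    rw [hTabs, hTdef, T_expand p N X a]
    refine (norm_sum_le _ _).trans ?_
    refine Finset.sum_le_sum fun i _ => ?_
    refine (norm_sum_le _ _).trans ?_
    refine Finset.sum_le_sum fun i' _ => ?_
    rw [norm_mul, norm_mul, Complex.norm_conj]
    exact mul_le_mul_of_nonneg_left (habsPP i i') (by positivity)
  have hxy : ∀ x y : ℝ, x * y ≤ x^2/2 + y^2/2 := by
    intro x y; nlinarith [sq_nonneg (x-y)]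
  have hstep2 : ∀ i i',
      ‖SS p N X a i‖ * ‖SS p N X a i'‖ * (if closeRel Fq N X i i' then qM else 0)
      ≤ (if closeRel Fq N X i i' then qM * (‖SS p N X a i‖^2/2) else 0)
        + (if closeRel Fq N X i i' then qM * (‖SS p N X a i'‖^2/2) else 0) := by
    intro i i'
    by_cases h : closeRel Fq N X i i'
    · rw [if_pos h, if_pos h, if_pos h, ← mul_add, mul_comm _ qM]
      exact mul_le_mul_of_nonneg_left (hxy _ _) hqM0
    · rw [if_neg h, if_neg h, if_neg h]
      simp
  have hinner1 : ∀ i : Fin R,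
      (∑ i', if closeRel Fq N X i i' then qM * (‖SS p N X a i‖^2/2) else 0)
        ≤ (𝒦 : ℝ) * (qM * (‖SS p N X a i‖^2/2)) := by
    intro i
    rw [Finset.sum_ite, Finset.sum_const, Finset.sum_const_zero, add_zero, nsmul_eq_mul]
    refine mul_le_mul_of_nonneg_right (hrow i) (by positivity)
  have hinner2 : ∀ i' : Fin R,
      (∑ i, if closeRel Fq N X i i' then qM * (‖SS p N X a i'‖^2/2) else 0)
        ≤ (𝒦 : ℝ) * (qM * (‖SS p N X a i'‖^2/2)) := by
    intro i'
    have hfil : (Finset.univ.filter fun i => closeRel Fq N X i i')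
        = (Finset.univ.filter fun i => closeRel Fq N X i' i) := by
      refine Finset.filter_congr fun i _ => ?_
      rw [hsymm]
    rw [Finset.sum_ite, Finset.sum_const, Finset.sum_const_zero, add_zero, nsmul_eq_mul, hfil]
    exact mul_le_mul_of_nonneg_right (hrow i') (by positivity)
  have hsum1 : (∑ i, ∑ i', if closeRel Fq N X i i' then qM * (‖SS p N X a i‖^2/2) else 0)
      ≤ qM * (𝒦 : ℝ) / 2 * L := by
    calc (∑ i, ∑ i', if closeRel Fq N X i i' then qM * (‖SS p N X a i‖^2/2) else 0)
        ≤ ∑ i, (𝒦 : ℝ) * (qM * (‖SS p N X a i‖^2/2)) :=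
          Finset.sum_le_sum fun i _ => hinner1 i
      _ = qM * (𝒦 : ℝ) / 2 * L := by
          rw [hLdef, Finset.mul_sum]
          exact Finset.sum_congr rfl fun i _ => by ring
  have hsum2 : (∑ i, ∑ i', if closeRel Fq N X i i' then qM * (‖SS p N X a i'‖^2/2) else 0)
      ≤ qM * (𝒦 : ℝ) / 2 * L := by
    rw [Finset.sum_comm]
    calc (∑ i', ∑ i, if closeRel Fq N X i i' then qM * (‖SS p N X a i'‖^2/2) else 0)
        ≤ ∑ i', (𝒦 : ℝ) * (qM * (‖SS p N X a i'‖^2/2)) :=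
          Finset.sum_le_sum fun i' _ => hinner2 i'
      _ = qM * (𝒦 : ℝ) / 2 * L := by
          rw [hLdef, Finset.mul_sum]
          exact Finset.sum_congr rfl fun i _ => by ring
  calc T ≤ ∑ i, ∑ i', ‖SS p N X a i‖ * ‖SS p N X a i'‖ *
        (if closeRel Fq N X i i' then qM else 0) := hstep1
    _ ≤ ∑ i, ∑ i', ((if closeRel Fq N X i i' then qM * (‖SS p N X a i‖^2/2) else 0)
          + (if closeRel Fq N X i i' then qM * (‖SS p N X a i'‖^2/2) else 0)) :=
        Finset.sum_le_sum fun i _ => Finset.sum_le_sum fun i' _ => hstep2 i i'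
    _ = (∑ i, ∑ i', if closeRel Fq N X i i' then qM * (‖SS p N X a i‖^2/2) else 0)
          + (∑ i, ∑ i', if closeRel Fq N X i i' then qM * (‖SS p N X a i'‖^2/2) else 0) := by
        simp only [Finset.sum_add_distrib]
    _ ≤ qM * (𝒦 : ℝ) / 2 * L + qM * (𝒦 : ℝ) / 2 * L := add_le_add hsum1 hsum2
    _ = qM * (𝒦 : ℝ) * L := by ring

end Bound

section Final
variable (p : ℕ) [Fact p.Prime] (Fq : Type) [Field Fq] [Fintype Fq] [CharP Fq p]
  [Algebra (ZMod p) Fq]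

lemma main_final (n R N : ℕ) (X : Fin R → Fin n → LaurentSeries Fq)
    (a : (Fin n → Polynomial Fq) → ℂ) (𝒦 : ℕ)
    (hK : ∀ i₁ : Fin R, Nat.card {i₂ : Fin R //
        (⨅ c : Fin n → Polynomial Fq, ⨆ j, absInfty (X i₁ j - X i₂ j + polyL (c j)))
          ≤ (Fintype.card Fq : ℝ) ^ (-(N + 2 : ℤ))} ≤ 𝒦) :
    (∑ i : Fin R,
      ‖∑' g : {g : Fin n → Polynomial Fq // ∀ j, (g j).degree ≤ (N : WithBot ℕ)},
        a g * eChar p (∑ j, polyL ((g : Fin n → Polynomial Fq) j) * X i j)‖ ^ 2)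
    ≤ 1 * (Fintype.card Fq : ℝ) ^ (n * (N + 1)) * 𝒦 *
      ∑' g : {g : Fin n → Polynomial Fq // ∀ j, (g j).degree ≤ (N : WithBot ℕ)},
        ‖a g‖ ^ 2 := by
  classical
  have h1 : ∀ i : Fin R,
      (∑' g : {g : Fin n → Polynomial Fq // ∀ j, (g j).degree ≤ (N : WithBot ℕ)},
        a g * eChar p (∑ j, polyL ((g : Fin n → Polynomial Fq) j) * X i j)) = SS p N X a i := by
    intro i
    rw [show SS p N X a i = ∑ g ∈ Fintype.piFinset (fun _ : Fin n => VF Fq N),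
      a g * eChar p (∑ j, polyL (g j) * X i j) from rfl]
    exact tsum_deg_le (M := ℂ) (fun g => a g * eChar p (∑ j, polyL (g j) * X i j))
  have h2 : (∑' g : {g : Fin n → Polynomial Fq // ∀ j, (g j).degree ≤ (N : WithBot ℕ)},
      ‖a g‖ ^ 2) = ∑ g ∈ DD Fq n N, ‖a g‖^2 := by
    rw [show (∑ g ∈ DD Fq n N, ‖a g‖^2)
      = ∑ g ∈ Fintype.piFinset (fun _ : Fin n => VF Fq N), ‖a g‖^2 from rfl]
    exact tsum_deg_le (M := ℝ) (fun g => ‖a g‖^2)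
  simp only [h1, h2]
  -- now pure finite statement
  set A : ℝ := ∑ g ∈ DD Fq n N, ‖a g‖^2 with hA
  set L : ℝ := ∑ i, ‖SS p N X a i‖^2 with hLdef
  set qM : ℝ := (Fintype.card Fq : ℝ) ^ (n * (N + 1)) with hqM
  have hqM0 : 0 ≤ qM := by positivity
  have hL0 : 0 ≤ L := Finset.sum_nonneg fun i _ => sq_nonneg _
  have hA0 : 0 ≤ A := Finset.sum_nonneg fun g _ => sq_nonneg _
  have hLle : L ≤ ∑ g ∈ DD Fq n N, ‖a g‖ * ‖WW p N X a g‖ := by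
    have hLabs : L = ‖((L : ℂ))‖ := by
      rw [Complex.norm_real, Real.norm_eq_abs, abs_of_nonneg hL0]
    rw [hLabs, hLdef, L_eq p N X a]
    refine (norm_sum_le _ _).trans ?_
    refine Finset.sum_le_sum fun g _ => ?_
    rw [norm_mul]
  have hCS : (∑ g ∈ DD Fq n N, ‖a g‖ * ‖WW p N X a g‖)^2
      ≤ A * (∑ g ∈ DD Fq n N, ‖WW p N X a g‖^2) := by
    rw [hA]
    exact Finset.sum_mul_sq_le_sq_mul_sq _ _ _
  have hTb := T_bound p N X a 𝒦 (fun i₁ => hK i₁)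
  have hL2 : L^2 ≤ A * (qM * (𝒦:ℝ) * L) := by
    calc L^2 ≤ (∑ g ∈ DD Fq n N, ‖a g‖ * ‖WW p N X a g‖)^2 := by
          exact pow_le_pow_left₀ hL0 hLle 2
      _ ≤ A * (∑ g ∈ DD Fq n N, ‖WW p N X a g‖^2) := hCS
      _ ≤ A * (qM * (𝒦:ℝ) * L) := by
          refine mul_le_mul_of_nonneg_left ?_ hA0
          exact hTb
  by_cases hL : L = 0
  · rw [hL]
    have : (0:ℝ) ≤ 1 * qM * (𝒦:ℝ) * A := by positivity
    exact this
  · have hLpos : 0 < L := lt_of_le_of_ne hL0 (Ne.symm hL)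
    have h9 : L * L ≤ (A * (qM * (𝒦:ℝ))) * L := by nlinarith [hL2]
    have h10 : L ≤ A * (qM * (𝒦:ℝ)) := le_of_mul_le_mul_right h9 hLpos
    calc L ≤ A * (qM * (𝒦:ℝ)) := h10
      _ = 1 * qM * (𝒦:ℝ) * A := by ring

end Final


/-- The general large sieve inequality over function fields in `n` dimensions
(Theorem 4 of the paper): for `R, N ∈ ℕ`, points `X₁, …, X_R ∈ k_∞ⁿ` and complex
numbers `(a_g)` indexed by `g ∈ Aⁿ`,
`∑_{i=1}^R |∑_{g ∈ Aⁿ, |g|_∞ ≤ q^N} a_g e(g·X_i)|² ≪ q^{n(N+1)} 𝒦 ∑_g |a_g|²`,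
where `𝒦` bounds, for each `i₁`, the number of `i₂` with
`‖X_{i₁} − X_{i₂}‖_∞ ≤ q^{−(N+2)}` on the torus `k_∞ⁿ/Aⁿ`; the implied constant is
absolute. -/
theorem stmt_17 :
    ∃ Cst : ℝ, 0 < Cst ∧
      ∀ (p : ℕ) (_ : Fact p.Prime)
        (Fq : Type) (_ : Field Fq) (_ : Fintype Fq) (_ : CharP Fq p)
        (_ : Algebra (ZMod p) Fq)
        (n R N : ℕ) (X : Fin R → Fin n → LaurentSeries Fq)
        (a : (Fin n → Polynomial Fq) → ℂ) (𝒦 : ℕ),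
        (∀ i₁ : Fin R, Nat.card {i₂ : Fin R //
            (⨅ c : Fin n → Polynomial Fq, ⨆ j, absInfty (X i₁ j - X i₂ j + polyL (c j)))
              ≤ (Fintype.card Fq : ℝ) ^ (-(N + 2 : ℤ))} ≤ 𝒦) →
        (∑ i : Fin R,
          ‖∑' g : {g : Fin n → Polynomial Fq // ∀ j, (g j).degree ≤ (N : WithBot ℕ)},
            a g * eChar p (∑ j, polyL ((g : Fin n → Polynomial Fq) j) * X i j)‖ ^ 2)
        ≤ Cst * (Fintype.card Fq : ℝ) ^ (n * (N + 1)) * 𝒦 *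
          ∑' g : {g : Fin n → Polynomial Fq // ∀ j, (g j).degree ≤ (N : WithBot ℕ)},
            ‖a g‖ ^ 2 := by
  refine ⟨1, one_pos, ?_⟩
  intro p hp Fq hF hFin hCh hAlg n R N X a 𝒦 hK
  exact @main_final p hp Fq hF hFin hCh hAlg n R N X a 𝒦 hK
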